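/- arXiv:1605.09093 — 3 statements merged into one kernel-verified Lean document; each statement's English description precedes it below -/
import Mathlib

section
/- Intermediate identity (equation (3.7) in the proof of Theorem 3.2). Let H = (h_e)_{e∈E} be a central essential hyperplane arrangement in ℝ^n and d ≥ 0 an integer. For G ⊆ E let Γ_G := {x ∈ (ℝ^d)^n : ‖h_e(x)‖₂ ≤ 1 if and only if e ∈ G}. Then ∫_{(ℝ^d)^n} Σ_{S ⊆ E spanning} ∏_{e∈S} (−𝟙[‖h_e(x)‖₂ ≤ 1]) dx = Σ_{G ⊆ E spanning} λ(Γ_G) · (Σ_{S ⊆ G, S spanning} (−1)^{|S|}), where λ is Lebesgue measure on (ℝ^d)^n; moreover λ(Γ_G) < ∞ for every spanning G. -/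
open MeasureTheory
open scoped ENNReal

noncomputable section

/-- Action of a linear functional with coefficient vector `a : Fin n → ℝ` on a
configuration of `n` points in a real vector space `V`:  `x ↦ ∑ i, a i • x i`. -/
def funcApp {n : ℕ} {V : Type*} [AddCommGroup V] [Module ℝ V]
    (a : Fin n → ℝ) (x : Fin n → V) : V := ∑ i, a i • x i

/-- `S ⊆ E` is spanning for the arrangement with coefficient vectors `a`:
the functionals `{h_e : e ∈ S}` span the dual of `ℝ^n` (identified with `ℝ^n`). -/
def IsSpanning {E : Type*} {n : ℕ} (a : E → Fin n → ℝ) (S : Finset E) : Prop :=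
  Submodule.span ℝ (a '' ↑S) = (⊤ : Submodule ℝ (Fin n → ℝ))

/-- A base is a spanning set of cardinality `n`. -/
def IsBase {E : Type*} {n : ℕ} (a : E → Fin n → ℝ) (S : Finset E) : Prop :=
  IsSpanning a S ∧ S.card = n

/-- The surface measure on the unit sphere of `ℝ^m`: the `(m-1)`-dimensional
Hausdorff measure restricted to the unit sphere. -/
def sphMeas (m : ℕ) : Measure (EuclideanSpace ℝ (Fin m)) :=
  (μH[(m : ℝ) - 1]).restrict (Metric.sphere 0 1)

/-- The space of `m`-dimensional `H`-polymers of type `S` (unit radii). -/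
def polymerBody {E : Type*} {n : ℕ} (m : ℕ) (a : E → Fin n → ℝ) (S : Finset E) :
    Set (Fin n → EuclideanSpace ℝ (Fin m)) :=
  {x | (∀ e ∈ S, ‖funcApp (a e) x‖ = 1) ∧ ∀ e ∉ S, 1 < ‖funcApp (a e) x‖}

/-- The map `Φ_S : x ↦ (h_e(x))_{e ∈ S}`. -/
def PhiMap {E : Type*} {n : ℕ} (m : ℕ) (a : E → Fin n → ℝ) (S : Finset E)
    (x : Fin n → EuclideanSpace ℝ (Fin m)) : ↥S → EuclideanSpace ℝ (Fin m) :=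
  fun e => funcApp (a e) x

/-- `vol(P^S(m)) := σ_m^{⊗S}(Φ_S(P^S(m)))`. -/
def polymerVol {E : Type*} {n : ℕ} (m : ℕ) (a : E → Fin n → ℝ) (S : Finset E) : ℝ≥0∞ :=
  Measure.pi (fun _ : ↥S => sphMeas m) (PhiMap m a S '' polymerBody m a S)

open scoped Classical in
/-- `vol(P_H(m))`: total volume of the space of `m`-dimensional `H`-polymers. -/
def polymerVolTotal {E : Type*} [Fintype E] {n : ℕ} (m : ℕ) (a : E → Fin n → ℝ) : ℝ≥0∞ :=
  ∑ S ∈ Finset.univ.filter (IsBase a), polymerVol m a S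

open scoped Classical in
/-- The integrand `Σ_{S spanning} ∏_{e∈S} (−𝟙[‖h_e(x)‖ ≤ 1])`. -/
def mayerIntegrand {E : Type*} [Fintype E] {n : ℕ} (d : ℕ) (a : E → Fin n → ℝ)
    (x : Fin n → EuclideanSpace ℝ (Fin d)) : ℝ :=
  ∑ S ∈ Finset.univ.filter (IsSpanning a),
    ∏ e ∈ S, (if ‖funcApp (a e) x‖ ≤ 1 then (-1 : ℝ) else 0)


/-- The region `Γ_G := {x : ‖h_e(x)‖ ≤ 1 iff e ∈ G}`. -/
def GammaSet {E : Type*} {n : ℕ} (d : ℕ) (a : E → Fin n → ℝ) (G : Finset E) :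
    Set (Fin n → EuclideanSpace ℝ (Fin d)) :=
  {x | ∀ e, ‖funcApp (a e) x‖ ≤ 1 ↔ e ∈ G}

/-! The integrand factorises through the set `G(x) = {e : ‖h_e(x)‖ ≤ 1}`: the product over `S` is
`(-1)^|S|` if `S ⊆ G(x)` and `0` otherwise, so the integrand equals `χ_{G(x)}(0)`, which vanishes
unless `G(x)` is spanning. Since `x ∈ Γ_G` exactly when `G = G(x)`, the integrand is
`∑_{G spanning} χ_G(0) 𝟙_{Γ_G}`, and integrating term by term gives the identity. Each `Γ_G` with
`G` spanning lies in the preimage of a product of unit balls under the injective linear map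
`x ↦ (h_e(x))_{e ∈ G}`, hence is bounded. -/

section Arrangement

variable {E V : Type*} {n : ℕ}

theorem funcApp_eq_linearCombination [AddCommGroup V] [Module ℝ V] (c : Fin n → ℝ)
    (x : Fin n → V) : funcApp c x = Fintype.linearCombination ℝ x c :=
  rfl

theorem IsSpanning.mono {a : E → Fin n → ℝ} {S G : Finset E} (hS : IsSpanning a S)
    (hSG : S ⊆ G) : IsSpanning a G :=
  top_le_iff.1 <| hS ▸ Submodule.span_mono (Set.image_mono (Finset.coe_subset.2 hSG))

/-- `c ↦ funcApp c x` is linear in `c`, so if it kills a spanning set it kills every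
`Pi.single i 1`, i.e. every `x i`. -/
theorem IsSpanning.eq_zero_of_funcApp_eq_zero [AddCommGroup V] [Module ℝ V]
    {a : E → Fin n → ℝ} {S : Finset E} (hS : IsSpanning a S) {x : Fin n → V}
    (hx : ∀ e ∈ S, funcApp (a e) x = 0) : x = 0 := by
  have hker : Submodule.span ℝ (a '' S) ≤ LinearMap.ker (Fintype.linearCombination ℝ x) :=
    Submodule.span_le.2 <| by
      rintro - ⟨e, he, rfl⟩
      rw [SetLike.mem_coe, LinearMap.mem_ker, ← funcApp_eq_linearCombination]
      exact hx e he
  rw [hS, top_le_iff, LinearMap.ker_eq_top] at hker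
  funext i
  simpa using LinearMap.congr_fun hker (Pi.single i 1)

def funcAppPi [AddCommGroup V] [Module ℝ V] (a : E → Fin n → ℝ) (S : Finset E) :
    (Fin n → V) →ₗ[ℝ] (S → V) :=
  LinearMap.pi fun e => ∑ i, a e i • LinearMap.proj i

theorem funcAppPi_apply [AddCommGroup V] [Module ℝ V] (a : E → Fin n → ℝ) (S : Finset E)
    (x : Fin n → V) (e : S) : funcAppPi a S x e = funcApp (a e) x := by
  simp [funcAppPi, funcApp]

theorem IsSpanning.injective_funcAppPi [AddCommGroup V] [Module ℝ V] {a : E → Fin n → ℝ}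
    {S : Finset E} (hS : IsSpanning a S) : Function.Injective (funcAppPi (V := V) a S) := by
  rw [← LinearMap.ker_eq_bot, LinearMap.ker_eq_bot']
  intro x hx
  refine hS.eq_zero_of_funcApp_eq_zero fun e he => ?_
  rw [← funcAppPi_apply a S x ⟨e, he⟩, hx, Pi.zero_apply]

theorem IsSpanning.isCompact_setOf_norm_funcApp_le [NormedAddCommGroup V] [NormedSpace ℝ V]
    [FiniteDimensional ℝ V] {a : E → Fin n → ℝ} {S : Finset E} (hS : IsSpanning a S) (r : ℝ) :
    IsCompact {x : Fin n → V | ∀ e ∈ S, ‖funcApp (a e) x‖ ≤ r} := by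
  have hK : IsCompact (Set.univ.pi fun _ : S => Metric.closedBall (0 : V) r) :=
    isCompact_univ_pi fun _ => isCompact_closedBall _ _
  convert (LinearMap.isClosedEmbedding_of_injective
    (LinearMap.ker_eq_bot.2 hS.injective_funcAppPi)).isCompact_preimage hK using 1
  ext x
  simp [funcAppPi_apply]

end Arrangement

section Gamma

variable {E : Type*} {n d : ℕ}

theorem measurableSet_gammaSet [Countable E] (a : E → Fin n → ℝ) (G : Finset E) :
    MeasurableSet (GammaSet d a G) := by
  refine measurableSet_setOfPred.2 <| Measurable.forall fun e => Measurable.iff ?_ measurable_const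
  exact measurableSet_setOfPred.1 <| measurableSet_le (by unfold funcApp; fun_prop) measurable_const

theorem IsSpanning.volume_gammaSet_lt_top {a : E → Fin n → ℝ} {G : Finset E}
    (hG : IsSpanning a G) : volume (GammaSet d a G) < ⊤ :=
  measure_lt_top_of_subset (fun _ hx e he => ((hx e).2 he))
    (hG.isCompact_setOf_norm_funcApp_le 1).measure_lt_top.ne

def overlapSet [Fintype E] (d : ℕ) (a : E → Fin n → ℝ) (x : Fin n → EuclideanSpace ℝ (Fin d)) :
    Finset E :=
  Finset.univ.filter fun e => ‖funcApp (a e) x‖ ≤ 1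

theorem mem_gammaSet_iff [Fintype E] {a : E → Fin n → ℝ} {G : Finset E}
    {x : Fin n → EuclideanSpace ℝ (Fin d)} : x ∈ GammaSet d a G ↔ G = overlapSet d a x := by
  simp [GammaSet, overlapSet, Finset.ext_iff, iff_comm]

end Gamma

section Mayer

open scoped Classical

variable {E : Type*} {n d : ℕ}

/-- `χ_G(0)`, by Whitney's formula for the characteristic polynomial of the subarrangement `G`. -/
def charPolyAtZero (a : E → Fin n → ℝ) (G : Finset E) : ℝ :=
  ∑ S ∈ G.powerset.filter (IsSpanning a), (-1 : ℝ) ^ S.card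

theorem charPolyAtZero_eq_zero_of_not_isSpanning {a : E → Fin n → ℝ} {G : Finset E}
    (hG : ¬ IsSpanning a G) : charPolyAtZero a G = 0 :=
  Finset.sum_eq_zero fun S hS => by
    rw [Finset.mem_filter, Finset.mem_powerset] at hS
    exact absurd (hS.2.mono hS.1) hG

theorem mayerIntegrand_eq_charPolyAtZero [Fintype E] (a : E → Fin n → ℝ)
    (x : Fin n → EuclideanSpace ℝ (Fin d)) :
    mayerIntegrand d a x = charPolyAtZero a (overlapSet d a x) := by
  have hprod : ∀ S : Finset E, (∏ e ∈ S, if ‖funcApp (a e) x‖ ≤ 1 then (-1 : ℝ) else 0) =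
      if S ⊆ overlapSet d a x then (-1) ^ S.card else 0 := by
    intro S
    simp [Finset.prod_ite_zero, Finset.subset_iff, overlapSet]
  simp only [mayerIntegrand, charPolyAtZero, hprod, Finset.sum_ite, Finset.sum_const_zero, add_zero]
  congr 1
  ext S
  simp [and_comm]

theorem mayerIntegrand_eq_sum_indicator [Fintype E] (a : E → Fin n → ℝ) :
    mayerIntegrand d a = fun x => ∑ G ∈ Finset.univ.filter (IsSpanning a),
      (GammaSet d a G).indicator (fun _ => charPolyAtZero a G) x := by
  funext x
  simp only [Set.indicator_apply, mem_gammaSet_iff, Finset.sum_ite_eq', Finset.mem_filter,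
    Finset.mem_univ, true_and]
  split_ifs with hG
  · exact mayerIntegrand_eq_charPolyAtZero a x
  · rw [mayerIntegrand_eq_charPolyAtZero, charPolyAtZero_eq_zero_of_not_isSpanning hG]

end Mayer

open scoped Classical in
theorem intermediate_identity_general
    {n : ℕ} {E : Type*} [Fintype E] (a : E → Fin n → ℝ)
    (d : ℕ) :
    (∫ x, mayerIntegrand d a x)
      = (∑ G ∈ Finset.univ.filter (IsSpanning a),
          (volume (GammaSet d a G)).toReal *
            ∑ S ∈ G.powerset.filter (IsSpanning a), (-1 : ℝ) ^ S.card)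
    ∧ ∀ G : Finset E, IsSpanning a G → volume (GammaSet d a G) < ⊤ := by
  refine ⟨?_, fun G hG => hG.volume_gammaSet_lt_top⟩
  have hint : ∀ G ∈ Finset.univ.filter (IsSpanning a),
      Integrable ((GammaSet d a G).indicator fun _ => charPolyAtZero a G) := fun G hG =>
    (integrable_indicator_iff (measurableSet_gammaSet a G)).2 <|
      integrableOn_const (Finset.mem_filter.1 hG).2.volume_gammaSet_lt_top.ne
  rw [mayerIntegrand_eq_sum_indicator, integral_finsetSum _ hint]
  refine Finset.sum_congr rfl fun G _ => ?_
  rw [integral_indicator_const _ (measurableSet_gammaSet a G), smul_eq_mul, measureReal_def,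
    charPolyAtZero]

open scoped Classical in
/-- **Intermediate identity** (equation (3.7) in the proof of Theorem 3.2). -/
theorem intermediate_identity
    {n : ℕ} (hn : 1 ≤ n) {E : Type*} [Fintype E] (a : E → Fin n → ℝ)
    (hnz : ∀ e, a e ≠ 0)
    (hess : Submodule.span ℝ (Set.range a) = (⊤ : Submodule ℝ (Fin n → ℝ)))
    (d : ℕ) :
    (∫ x, mayerIntegrand d a x)
      = (∑ G ∈ Finset.univ.filter (IsSpanning a),
          (volume (GammaSet d a G)).toReal *
            ∑ S ∈ G.powerset.filter (IsSpanning a), (-1 : ℝ) ^ S.card)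
    ∧ ∀ G : Finset E, IsSpanning a G → volume (GammaSet d a G) < ⊤ :=
  intermediate_identity_general a d
end
end

section
/- Balanced partition function identity (equation (4.10)). Let d ≥ 1, n ≥ 1, and let Λ ⊆ ℝ^d be a bounded Borel set with Λ = −Λ. For a signed graph E on {1,…,n} and x = (x_1,…,x_n) ∈ (ℝ^d)^n set w(E, x) := ∏_{(i,j,s)∈E} (−𝟙[‖x_i − s·x_j‖₂ ≤ 1]). Then Σ_{E balanced signed graph on {1,…,n}} ∫_{Λ^n} w(E,x) dx = Σ_{H simple graph on {1,…,n}} 2^{n − c(H)} ∫_{Λ^n} ∏_{{i,j}∈E(H)} (−𝟙[‖x_i − x_j‖₂ ≤ 1]) dx, where c(H) is the number of connected components of H (isolated vertices counted) and Λ^n := {x : x_i ∈ Λ for all i}. -/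
open MeasureTheory
open scoped ENNReal Classical

noncomputable section

/-- A signed graph on a vertex set `V` is encoded as a finite set of pairs
`(e, s)` where `e ∈ Sym2 V` is an unordered pair of vertices and `s ∈ {±1} = ℤˣ`
is a sign; properness (no loops) is imposed separately via `¬ e.IsDiag`.
`IsBalancedSG G` says every cycle of `G` is balanced: there is no pair of parallel
edges of opposite signs (a two-edge cycle, always unbalanced), and every cycle on
`k ≥ 3` distinct vertices has sign product `+1`. -/
def IsBalancedSG {V : Type*} (G : Finset (Sym2 V × ℤˣ)) : Prop :=
  (∀ i j : V, i ≠ j → ¬ ((s(i, j), (1 : ℤˣ)) ∈ G ∧ (s(i, j), (-1 : ℤˣ)) ∈ G)) ∧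
  ∀ k : ℕ, ∀ v : Fin (k + 3) → V, Function.Injective v →
    ∀ σ : Fin (k + 3) → ℤˣ, (∀ m : Fin (k + 3), (s(v m, v (m + 1)), σ m) ∈ G) →
      (∏ m, σ m) = 1

/-- The Mayer factor `−𝟙[‖x_i − s·x_j‖ ≤ 1]` attached to a signed edge `({i,j}, s)`;
it is well defined on unordered pairs since `‖x_i − s·x_j‖ = ‖x_j − s·x_i‖` for
`s ∈ {±1}`. -/
def sgFactor {V : Type*} {d : ℕ} (x : V → EuclideanSpace ℝ (Fin d))
    (p : Sym2 V × ℤˣ) : ℝ :=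
  Sym2.lift ⟨fun i j => if ‖x i - (((p.2 : ℤ) : ℝ)) • x j‖ ≤ 1 then (-1 : ℝ) else 0, by
    intro i j
    beta_reduce
    rcases Int.units_eq_one_or p.2 with h | h <;> rw [h]
    · have h1 : (((1 : ℤˣ) : ℤ) : ℝ) = 1 := by norm_num
      rw [h1, one_smul, one_smul, norm_sub_rev]
    · have h1 : (((-1 : ℤˣ) : ℤ) : ℝ) = -1 := by norm_num
      rw [h1, neg_one_smul, neg_one_smul, sub_neg_eq_add, sub_neg_eq_add, add_comm]⟩ p.1

/-- The Mayer factor `−𝟙[‖x_i − x_j‖ ≤ 1]` attached to an unordered pair `{i,j}`. -/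
def pairFactor {V : Type*} {d : ℕ} (x : V → EuclideanSpace ℝ (Fin d)) :
    Sym2 V → ℝ :=
  Sym2.lift ⟨fun i j => if ‖x i - x j‖ ≤ 1 then (-1 : ℝ) else 0,
    fun i j => by beta_reduce; rw [norm_sub_rev]⟩

/-!
By Harary's theorem a signed graph is balanced exactly when it arises from its underlying simple
graph `H` by a switching `τ : V → {±1}`, the edge `{i, j}` receiving the sign `τ i * τ j`. Two
switchings give the same signed graph iff their ratio is constant on every connected component
of `H`, so each `H` underlies exactly `2 ^ (n - c(H))` balanced signed graphs. Finally, the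
substitution `x i ↦ τ i • x i` preserves Lebesgue measure and, as `Λ = -Λ`, also `Λ^n`, and it
turns the weight of the switched graph into the weight of `H`; so all these signed graphs
contribute the same integral.
-/

namespace SignedGraph

section Switching

variable {V : Type*} {H : SimpleGraph V}

def prodSign (τ : V → ℤˣ) : Sym2 V → ℤˣ :=
  Sym2.lift ⟨fun i j => τ i * τ j, fun _ _ => mul_comm _ _⟩

@[simp] lemma prodSign_mk (τ : V → ℤˣ) (i j : V) : prodSign τ s(i, j) = τ i * τ j := rfl

lemma prodSign_mul_eq_prodSign_iff (g τ : V → ℤˣ) (i j : V) :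
    prodSign (g * τ) s(i, j) = prodSign τ s(i, j) ↔ g i = g j := by
  rw [prodSign_mk, prodSign_mk, Pi.mul_apply, Pi.mul_apply, mul_mul_mul_comm, mul_eq_right,
    mul_eq_one_iff_eq_inv, Int.units_inv_eq_self]

lemma prod_prodSign_cycle {k : ℕ} [NeZero k] (τ : V → ℤˣ) (v : Fin k → V) :
    ∏ m, prodSign τ s(v m, v (m + 1)) = 1 := by
  have hshift : ∏ m, τ (v (m + 1)) = ∏ m, τ (v m) :=
    Fintype.prod_equiv (Equiv.addRight 1) _ _ fun _ => rfl
  simp only [prodSign_mk, Finset.prod_mul_distrib, hshift, Int.units_mul_self]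

lemma _root_.SimpleGraph.Reachable.apply_eq {β : Type*} {f : V → β}
    (hf : ∀ a b, H.Adj a b → f a = f b) {a b : V} (h : H.Reachable a b) : f a = f b := by
  obtain ⟨p⟩ := h
  induction p with
  | nil => rfl
  | cons hadj _ ih => exact (hf _ _ hadj).trans ih

lemma mem_edgeSet_deleteEdges_of_ne {e f : Sym2 V} (hf : f ∈ H.edgeSet) (hfe : f ≠ e) :
    f ∈ (H.deleteEdges {e}).edgeSet :=
  H.edgeSet_deleteEdges _ ▸ ⟨hf, hfe⟩

lemma prodSign_eqOn_edgeSet_iff {τ τ₀ : V → ℤˣ} :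
    (∀ e ∈ H.edgeSet, prodSign τ e = prodSign τ₀ e) ↔
      ∃ g : H.ConnectedComponent → ℤˣ, τ = (g ∘ H.connectedComponentMk) * τ₀ := by
  constructor
  · intro h
    have hτ : τ = (τ * τ₀) * τ₀ := by
      funext x; simp only [Pi.mul_apply, mul_assoc, Int.units_mul_self, mul_one]
    have hadj : ∀ a b, H.Adj a b → (τ * τ₀) a = (τ * τ₀) b := fun a b hab =>
      (prodSign_mul_eq_prodSign_iff (τ * τ₀) τ₀ a b).1 (hτ ▸ h _ hab)
    exact ⟨SimpleGraph.ConnectedComponent.lift (τ * τ₀)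
      fun _ _ p _ => p.reachable.apply_eq hadj, hτ⟩
  · rintro ⟨g, rfl⟩ e he
    induction e using Sym2.ind with | _ a b => ?_
    exact (prodSign_mul_eq_prodSign_iff _ _ a b).2
      (congrArg g (SimpleGraph.ConnectedComponent.connectedComponentMk_eq_of_adj he))

lemma _root_.IsBalancedSG.mono {G G' : Finset (Sym2 V × ℤˣ)} (hG : IsBalancedSG G)
    (hsub : G' ⊆ G) : IsBalancedSG G' :=
  ⟨fun i j hij hmem => hG.1 i j hij ⟨hsub hmem.1, hsub hmem.2⟩,
    fun k v hv σ hσ => hG.2 k v hv σ fun m => hsub (hσ m)⟩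

/-- The path closed up by the chord `{i, j}` is a cycle of `G`; its sign product is `1`, and so
is the one of the switching `τ` along the same cycle. -/
lemma _root_.IsBalancedSG.eq_mul_of_isPath {G : Finset (Sym2 V × ℤˣ)} (hG : IsBalancedSG G)
    {i j : V} {q : H.Walk i j} (hq : q.IsPath) (hlen : 2 ≤ q.length) {τ : V → ℤˣ}
    (hqG : ∀ e ∈ q.edges, (e, prodSign τ e) ∈ G) {u : ℤˣ} (hu : (s(i, j), u) ∈ G) :
    u = τ i * τ j := by
  obtain ⟨k, hk⟩ : ∃ k, q.length = k + 2 := ⟨q.length - 2, by omega⟩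
  set v : Fin (k + 3) → V := fun m => q.getVert m
  have hv : Function.Injective v := fun a b hab =>
    Fin.ext (hq.getVert_injOn (by simp; omega) (by simp; omega) hab)
  have hv_last : v (Fin.last (k + 2)) = j := by simp [v, ← hk]
  have hv_first : v (Fin.last (k + 2) + 1) = i := by simp [v, Fin.last_add_one]
  have hv_succ (m : Fin (k + 2)) : v (m.castSucc + 1) = q.getVert (m + 1) := by
    simp [v, Fin.coeSucc_eq_succ]
  set f : Fin (k + 3) → ℤˣ := fun m => prodSign τ s(v m, v (m + 1))
  have hcycle := hG.2 k v hv (Function.update f (Fin.last _) u) fun m => by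
    induction m using Fin.lastCases with
    | last => rw [Function.update_self, hv_last, hv_first, Sym2.eq_swap]; exact hu
    | cast m =>
      rw [Function.update_of_ne (Fin.castSucc_ne_last m)]
      exact hqG _ (q.mk_mem_edges_iff_exists.2 ⟨m, by omega, by rw [hv_succ]; rfl⟩)
  have hswitched := prod_prodSign_cycle τ v
  rw [Fin.prod_univ_castSucc, Function.update_self] at hcycle
  rw [Fin.prod_univ_castSucc] at hswitched
  simp only [Function.update_of_ne (Fin.castSucc_ne_last _)] at hcycle
  have := mul_left_cancel (hcycle.trans hswitched.symm)
  rwa [prodSign_mk, hv_last, hv_first, mul_comm] at this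

end Switching

section SignedGraphs

variable {V : Type*} [Fintype V] [DecidableEq V]

def signedGraph (H : SimpleGraph V) (σ : Sym2 V → ℤˣ) : Finset (Sym2 V × ℤˣ) :=
  H.edgeFinset.image fun e => (e, σ e)

def underlying (G : Finset (Sym2 V × ℤˣ)) : SimpleGraph V where
  Adj i j := i ≠ j ∧ ∃ s, (s(i, j), s) ∈ G
  symm := ⟨by rintro i j ⟨h, s, hs⟩; exact ⟨h.symm, s, by rwa [Sym2.eq_swap]⟩⟩
  loopless := ⟨fun _ h => h.1 rfl⟩

variable {H : SimpleGraph V} {σ σ' : Sym2 V → ℤˣ}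

lemma mem_signedGraph {e : Sym2 V} {u : ℤˣ} :
    (e, u) ∈ signedGraph H σ ↔ e ∈ H.edgeSet ∧ σ e = u := by
  simp [signedGraph]

lemma underlying_signedGraph : underlying (signedGraph H σ) = H := by
  ext i j
  simp only [underlying, mem_signedGraph, SimpleGraph.mem_edgeSet,
    exists_and_left, exists_eq', and_true]
  exact ⟨And.right, fun h => ⟨h.ne, h⟩⟩

lemma not_isDiag_of_mem_signedGraph {p : Sym2 V × ℤˣ} (hp : p ∈ signedGraph H σ) :
    ¬ p.1.IsDiag :=
  H.not_isDiag_of_mem_edgeSet (mem_signedGraph.1 hp).1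

lemma signedGraph_eq_signedGraph_iff :
    signedGraph H σ = signedGraph H σ' ↔ ∀ e ∈ H.edgeSet, σ e = σ' e := by
  refine ⟨fun h e he => ?_,
    fun h => Finset.image_congr fun e he => by rw [h e (SimpleGraph.mem_edgeFinset.1 he)]⟩
  have hmem : (e, σ e) ∈ signedGraph H σ' := h ▸ mem_signedGraph.2 ⟨he, rfl⟩
  exact ((mem_signedGraph.1 hmem).2).symm

lemma isBalancedSG_signedGraph_prodSign (H : SimpleGraph V) (τ : V → ℤˣ) :
    IsBalancedSG (signedGraph H (prodSign τ)) := by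
  refine ⟨fun i j _ ⟨hpos, hneg⟩ => ?_, fun k v _ σ hσ => ?_⟩
  · have h := (mem_signedGraph.1 hpos).2.symm.trans (mem_signedGraph.1 hneg).2
    exact absurd h (by decide)
  · have hσ' : σ = fun m => prodSign τ s(v m, v (m + 1)) :=
      funext fun m => ((mem_signedGraph.1 (hσ m)).2).symm
    rw [hσ']
    exact prod_prodSign_cycle τ v

lemma exists_eq_signedGraph_underlying {G : Finset (Sym2 V × ℤˣ)}
    (hG : ∀ p ∈ G, ¬ p.1.IsDiag) (hbal : IsBalancedSG G) :
    ∃ σ, G = signedGraph (underlying G) σ := by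
  set σ : Sym2 V → ℤˣ := fun e => if (e, 1) ∈ G then 1 else -1
  refine ⟨σ, Finset.ext fun ⟨e, u⟩ => ?_⟩
  induction e using Sym2.ind with | _ i j => ?_
  have hne : ∀ {s}, (s(i, j), s) ∈ G → i ≠ j := fun hs => by simpa using hG _ hs
  have hsign : ∀ {s}, (s(i, j), s) ∈ G → σ s(i, j) = s := by
    intro s hs
    rcases Int.units_eq_one_or s with rfl | rfl
    · exact if_pos hs
    · exact if_neg fun h1 => hbal.1 i j (hne hs) ⟨h1, hs⟩
  rw [mem_signedGraph, SimpleGraph.mem_edgeSet]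
  refine ⟨fun hu => ⟨⟨hne hu, u, hu⟩, hsign hu⟩, ?_⟩
  rintro ⟨⟨-, s, hs⟩, rfl⟩
  rwa [hsign hs]

lemma signedGraph_mono {H' : SimpleGraph V} (h : H' ≤ H) :
    signedGraph H' σ ⊆ signedGraph H σ :=
  Finset.image_subset_image (SimpleGraph.edgeFinset_mono h)

lemma eq_prodSign_of_reachable_deleteEdges (hbal : IsBalancedSG (signedGraph H σ)) {i j : V}
    (hij : H.Adj i j) {τ : V → ℤˣ}
    (hτ : ∀ e ∈ (H.deleteEdges {s(i, j)}).edgeSet, σ e = prodSign τ e)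
    (hreach : (H.deleteEdges {s(i, j)}).Reachable i j) :
    σ s(i, j) = prodSign τ s(i, j) := by
  obtain ⟨q, hq⟩ := hreach.some.toPath
  have hlen : 2 ≤ q.length := by
    have h0 : q.length ≠ 0 := fun h => hij.ne (q.eq_of_length_eq_zero h)
    have h1 : q.length ≠ 1 := fun h => by simpa using q.adj_of_length_eq_one h
    omega
  refine hbal.eq_mul_of_isPath hq hlen (fun f hf => ?_) (mem_signedGraph.2 ⟨hij, rfl⟩)
  have hf' := q.edges_subset_edgeSet hf
  exact mem_signedGraph.2 ⟨SimpleGraph.edgeSet_mono (H.deleteEdges_le _) hf', hτ f hf'⟩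

/-- Either `{i, j}` closes a cycle through `H - {i, j}`, and balance forces its sign, or it is a
bridge, and switching the component of `j` in `H - {i, j}` corrects its sign alone. -/
lemma exists_prodSign_of_deleteEdges (hbal : IsBalancedSG (signedGraph H σ)) {i j : V}
    (hij : H.Adj i j) {τ : V → ℤˣ}
    (hτ : ∀ e ∈ (H.deleteEdges {s(i, j)}).edgeSet, σ e = prodSign τ e) :
    ∃ τ' : V → ℤˣ, ∀ e ∈ H.edgeSet, σ e = prodSign τ' e := by
  set H' := H.deleteEdges {s(i, j)}
  by_cases hreach : H'.Reachable i j
  · refine ⟨τ, fun e he => ?_⟩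
    obtain rfl | he' := eq_or_ne e s(i, j)
    · exact eq_prodSign_of_reachable_deleteEdges hbal hij hτ hreach
    · exact hτ e (mem_edgeSet_deleteEdges_of_ne he he')
  · set g : V → ℤˣ := fun x => if H'.Reachable j x then σ s(i, j) * τ i * τ j else 1
    refine ⟨g * τ, fun e he => ?_⟩
    obtain rfl | he' := eq_or_ne e s(i, j)
    · have hgi : g i = 1 := if_neg fun h => hreach h.symm
      have hgj : g j = σ s(i, j) * τ i * τ j := if_pos (SimpleGraph.Reachable.refl j)
      simp only [prodSign_mk, Pi.mul_apply, hgi, hgj, one_mul]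
      rw [mul_assoc _ (τ j), Int.units_mul_self, mul_one, mul_left_comm, Int.units_mul_self,
        mul_one]
    · have he'' := mem_edgeSet_deleteEdges_of_ne he he'
      induction e using Sym2.ind with | _ a b => ?_
      have hab : H'.Adj a b := he''
      have hreach_iff : H'.Reachable j a ↔ H'.Reachable j b :=
        ⟨fun h => h.trans hab.reachable, fun h => h.trans hab.symm.reachable⟩
      have hg : g a = g b := by simp only [g, hreach_iff]
      rw [hτ _ he'', (prodSign_mul_eq_prodSign_iff g τ a b).2 hg]

theorem exists_prodSign_of_isBalancedSG (H : SimpleGraph V) (σ : Sym2 V → ℤˣ)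
    (hbal : IsBalancedSG (signedGraph H σ)) :
    ∃ τ : V → ℤˣ, ∀ e ∈ H.edgeSet, σ e = prodSign τ e := by
  induction H using WellFoundedLT.induction with
  | _ H ih =>
  by_cases hH : ∃ i j, H.Adj i j
  · obtain ⟨i, j, hij⟩ := hH
    have hlt : H.deleteEdges {s(i, j)} < H :=
      (H.deleteEdges_le _).lt_of_ne fun h =>
        (by simpa using congrArg (·.Adj i j) h : ¬ H.Adj i j) hij
    obtain ⟨τ, hτ⟩ := ih _ hlt (hbal.mono (signedGraph_mono hlt.le))
    exact exists_prodSign_of_deleteEdges hbal hij hτ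
  · refine ⟨1, fun e he => absurd he ?_⟩
    induction e using Sym2.ind with | _ a b => exact fun h => hH ⟨a, b, h⟩

theorem exists_eq_signedGraph_prodSign {G : Finset (Sym2 V × ℤˣ)}
    (hG : ∀ p ∈ G, ¬ p.1.IsDiag) (hbal : IsBalancedSG G) :
    ∃ τ : V → ℤˣ, G = signedGraph (underlying G) (prodSign τ) := by
  obtain ⟨σ, hσ⟩ := exists_eq_signedGraph_underlying hG hbal
  obtain ⟨τ, hτ⟩ := exists_prodSign_of_isBalancedSG _ σ (hσ ▸ hbal)
  exact ⟨τ, hσ.trans (signedGraph_eq_signedGraph_iff.2 hτ)⟩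

lemma card_filter_signedGraph_prodSign_eq (H : SimpleGraph V) (τ₀ : V → ℤˣ) :
    (Finset.univ.filter fun τ =>
        signedGraph H (prodSign τ) = signedGraph H (prodSign τ₀)).card =
      2 ^ Fintype.card H.ConnectedComponent := by
  have hfiber : (Finset.univ.filter fun τ =>
      signedGraph H (prodSign τ) = signedGraph H (prodSign τ₀)) =
        Finset.univ.image fun g : H.ConnectedComponent → ℤˣ =>
          (g ∘ H.connectedComponentMk) * τ₀ := by
    ext τ
    simp only [Finset.mem_filter, Finset.mem_univ, true_and, Finset.mem_image,
      signedGraph_eq_signedGraph_iff, prodSign_eqOn_edgeSet_iff]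
    exact exists_congr fun _ => eq_comm
  have hinj : Function.Injective fun g : H.ConnectedComponent → ℤˣ =>
      (g ∘ H.connectedComponentMk) * τ₀ := fun g g' h =>
    Quot.mk_surjective.injective_comp_right (mul_right_cancel h)
  rw [hfiber, Finset.card_image_of_injective _ hinj, Finset.card_univ, Fintype.card_fun,
    Fintype.card_units_int]

/-- The `2 ^ |V|` switchings cover the image in fibres of size `2 ^ c(H)`. -/
lemma card_image_signedGraph_prodSign (H : SimpleGraph V) :
    (Finset.univ.image fun τ : V → ℤˣ => signedGraph H (prodSign τ)).card =
      2 ^ (Fintype.card V - Fintype.card H.ConnectedComponent) := by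
  have hcount := Finset.card_eq_sum_card_image (fun τ : V → ℤˣ => signedGraph H (prodSign τ))
    Finset.univ
  rw [Finset.sum_congr rfl fun G hG => ?_, Finset.sum_const, smul_eq_mul, Finset.card_univ,
    Fintype.card_fun, Fintype.card_units_int] at hcount
  · have hc : Fintype.card H.ConnectedComponent ≤ Fintype.card V :=
      Fintype.card_le_of_surjective _ Quot.mk_surjective
    rw [← Nat.pow_sub_mul_pow 2 hc] at hcount
    exact (Nat.eq_of_mul_eq_mul_right (by positivity) hcount).symm
  · obtain ⟨τ₀, -, rfl⟩ := Finset.mem_image.1 hG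
    exact card_filter_signedGraph_prodSign_eq H τ₀

lemma filter_underlying_eq_image (H : SimpleGraph V) :
    ((Finset.univ.filter fun G : Finset (Sym2 V × ℤˣ) =>
        (∀ p ∈ G, ¬ p.1.IsDiag) ∧ IsBalancedSG G).filter fun G => underlying G = H) =
      Finset.univ.image fun τ : V → ℤˣ => signedGraph H (prodSign τ) := by
  ext G
  simp only [Finset.mem_filter, Finset.mem_univ, true_and, Finset.mem_image]
  constructor
  · rintro ⟨⟨hG, hbal⟩, rfl⟩
    obtain ⟨τ, hτ⟩ := exists_eq_signedGraph_prodSign hG hbal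
    exact ⟨τ, hτ.symm⟩
  · rintro ⟨τ, rfl⟩
    exact ⟨⟨fun p => not_isDiag_of_mem_signedGraph, isBalancedSG_signedGraph_prodSign H τ⟩,
      underlying_signedGraph⟩

end SignedGraphs

lemma intCast_units_eq_one_or (u : ℤˣ) : ((u : ℤ) : ℝ) = 1 ∨ ((u : ℤ) : ℝ) = -1 := by
  rcases Int.units_eq_one_or u with rfl | rfl <;> simp

lemma intCast_units_mul_self (u : ℤˣ) : ((u : ℤ) : ℝ) * ((u : ℤ) : ℝ) = 1 := by
  rcases intCast_units_eq_one_or u with h | h <;> simp [h]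

section Configurations

variable {V E : Type*} [NormedAddCommGroup E] [NormedSpace ℝ E]

lemma norm_intCast_units_smul (u : ℤˣ) (y : E) : ‖((u : ℤ) : ℝ) • y‖ = ‖y‖ := by
  rcases intCast_units_eq_one_or u with h | h <;> simp [h]

lemma intCast_units_smul_mem_iff {Λ : Set E} (hΛ : Λ = -Λ) (u : ℤˣ) (y : E) :
    ((u : ℤ) : ℝ) • y ∈ Λ ↔ y ∈ Λ := by
  rcases intCast_units_eq_one_or u with h | h
  · simp [h]
  · rw [h, neg_one_smul]
    nth_rw 1 [hΛ]
    exact Set.neg_mem_neg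

def switchConfig (τ : V → ℤˣ) (x : V → E) : V → E := fun i => ((τ i : ℤ) : ℝ) • x i

lemma switchConfig_involutive (τ : V → ℤˣ) : Function.Involutive (switchConfig (E := E) τ) :=
  fun x => funext fun i => by simp [switchConfig, smul_smul, intCast_units_mul_self]

lemma preimage_switchConfig_pi {Λ : Set E} (hΛ : Λ = -Λ) (τ : V → ℤˣ) :
    switchConfig τ ⁻¹' {x | ∀ i, x i ∈ Λ} = {x | ∀ i, x i ∈ Λ} := by
  ext x
  simp [switchConfig, intCast_units_smul_mem_iff hΛ]

variable [MeasurableSpace E] [BorelSpace E] (μ : Measure E) [μ.IsNegInvariant]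

lemma measurePreserving_intCast_units_smul (u : ℤˣ) :
    MeasurePreserving (fun y : E => ((u : ℤ) : ℝ) • y) μ μ := by
  rcases intCast_units_eq_one_or u with h | h
  · simp only [h, one_smul]
    exact MeasurePreserving.id μ
  · simpa [h] using Measure.measurePreserving_neg μ

variable [Fintype V] [SigmaFinite μ]

lemma measurePreserving_switchConfig (τ : V → ℤˣ) :
    MeasurePreserving (switchConfig τ) (Measure.pi fun _ : V => μ) (Measure.pi fun _ => μ) :=
  measurePreserving_pi _ _ fun i => measurePreserving_intCast_units_smul μ (τ i)

lemma setIntegral_comp_switchConfig {Λ : Set E} (hΛ : Λ = -Λ) (τ : V → ℤˣ)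
    (F : (V → E) → ℝ) :
    ∫ x in {x | ∀ i, x i ∈ Λ}, F (switchConfig τ x) ∂Measure.pi (fun _ => μ) =
      ∫ x in {x | ∀ i, x i ∈ Λ}, F x ∂Measure.pi (fun _ => μ) := by
  have hmp := measurePreserving_switchConfig μ τ
  have hemb := (MeasurableEquiv.ofInvolutive _ (switchConfig_involutive τ)
    hmp.measurable).measurableEmbedding
  simpa only [preimage_switchConfig_pi hΛ] using
    hmp.setIntegral_preimage_emb hemb F {x | ∀ i, x i ∈ Λ}

end Configurations

variable {V : Type*} {d : ℕ}

lemma sgFactor_prodSign (x : V → EuclideanSpace ℝ (Fin d)) (τ : V → ℤˣ) (e : Sym2 V) :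
    sgFactor x (e, prodSign τ e) = pairFactor (switchConfig τ x) e := by
  induction e using Sym2.ind with | _ i j => ?_
  have hnorm : ‖x i - (((τ i * τ j : ℤˣ) : ℤ) : ℝ) • x j‖ =
      ‖((τ i : ℤ) : ℝ) • x i - ((τ j : ℤ) : ℝ) • x j‖ := by
    rw [← norm_intCast_units_smul (τ i), smul_sub, smul_smul, Units.val_mul, Int.cast_mul,
      ← mul_assoc, intCast_units_mul_self, one_mul]
  simp only [sgFactor, pairFactor, switchConfig, prodSign_mk, Sym2.lift_mk, hnorm]
  congr

lemma setIntegral_prod_sgFactor_signedGraph_prodSign [Fintype V] [DecidableEq V]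
    {Λ : Set (EuclideanSpace ℝ (Fin d))} (hΛ : Λ = -Λ) (H : SimpleGraph V) (τ : V → ℤˣ) :
    ∫ x in {x : V → EuclideanSpace ℝ (Fin d) | ∀ i, x i ∈ Λ},
        ∏ p ∈ signedGraph H (prodSign τ), sgFactor x p =
      ∫ x in {x : V → EuclideanSpace ℝ (Fin d) | ∀ i, x i ∈ Λ},
        ∏ e ∈ H.edgeFinset, pairFactor x e := by
  have hprod (x : V → EuclideanSpace ℝ (Fin d)) :
      ∏ p ∈ signedGraph H (prodSign τ), sgFactor x p =
        ∏ e ∈ H.edgeFinset, pairFactor (switchConfig τ x) e := by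
    rw [signedGraph, Finset.prod_image fun _ _ _ _ h => congrArg Prod.fst h]
    exact Finset.prod_congr rfl fun e _ => sgFactor_prodSign x τ e
  simp only [hprod, volume_pi]
  exact setIntegral_comp_switchConfig volume hΛ τ fun x => ∏ e ∈ H.edgeFinset, pairFactor x e

end SignedGraph

theorem balanced_partition_identity_general (d n : ℕ)
    (Λ : Set (EuclideanSpace ℝ (Fin d))) (hsym : Λ = -Λ) :
    (∑ G ∈ Finset.univ.filter (fun G : Finset (Sym2 (Fin n) × ℤˣ) =>
        (∀ p ∈ G, ¬ p.1.IsDiag) ∧ IsBalancedSG G),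
      ∫ x in {x : Fin n → EuclideanSpace ℝ (Fin d) | ∀ i, x i ∈ Λ},
        ∏ p ∈ G, sgFactor x p)
    = ∑ H : SimpleGraph (Fin n),
        (2 : ℝ) ^ (n - Fintype.card H.ConnectedComponent) *
          ∫ x in {x : Fin n → EuclideanSpace ℝ (Fin d) | ∀ i, x i ∈ Λ},
            ∏ e ∈ H.edgeFinset, pairFactor x e := by
  rw [← Finset.sum_fiberwise _ SignedGraph.underlying]
  refine Finset.sum_congr rfl fun H _ => ?_
  rw [SignedGraph.filter_underlying_eq_image, Finset.sum_eq_card_nsmul fun G hG => ?_,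
    SignedGraph.card_image_signedGraph_prodSign, Fintype.card_fin, nsmul_eq_mul, Nat.cast_pow,
    Nat.cast_ofNat]
  obtain ⟨τ, -, rfl⟩ := Finset.mem_image.1 hG
  exact SignedGraph.setIntegral_prod_sgFactor_signedGraph_prodSign hsym H τ

/-- **Balanced partition function identity** (equation (4.10)). -/
theorem balanced_partition_identity (d n : ℕ) (hd : 1 ≤ d) (hn : 1 ≤ n)
    (Λ : Set (EuclideanSpace ℝ (Fin d))) (hmeas : MeasurableSet Λ)
    (hbdd : Bornology.IsBounded Λ) (hsym : Λ = -Λ) :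
    (∑ G ∈ Finset.univ.filter (fun G : Finset (Sym2 (Fin n) × ℤˣ) =>
        (∀ p ∈ G, ¬ p.1.IsDiag) ∧ IsBalancedSG G),
      ∫ x in {x : Fin n → EuclideanSpace ℝ (Fin d) | ∀ i, x i ∈ Λ},
        ∏ p ∈ G, sgFactor x p)
    = ∑ H : SimpleGraph (Fin n),
        (2 : ℝ) ^ (n - Fintype.card H.ConnectedComponent) *
          ∫ x in {x : Fin n → EuclideanSpace ℝ (Fin d) | ∀ i, x i ∈ Λ},
            ∏ e ∈ H.edgeFinset, pairFactor x e :=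
  balanced_partition_identity_general d n Λ hsym
end
end

section
/- Proposition 2.6 (rotation invariance of the law of H-polymers). Let H = (h_e)_{e∈E} be a central essential hyperplane arrangement in ℝ^n and let d ≥ 1 be an integer. Let R : ℝ^d → ℝ^d be a linear isometry and let ρ_R : (ℝ^d)^n → (ℝ^d)^n apply R to each coordinate, ρ_R(x_1,…,x_n) = (Rx_1,…,Rx_n). Then for every base S: (i) ρ_R maps P^S(d) bijectively onto P^S(d), and (ii) for every Borel set A ⊆ (ℝ^d)^n, σ_d^{⊗S}(Φ_S(ρ_R(A) ∩ P^S(d))) = σ_d^{⊗S}(Φ_S(A ∩ P^S(d))). -/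
open MeasureTheory
open scoped ENNReal

noncomputable section

/-!
A linear isometry `R` commutes with every functional `h_e`, so `ρ_R` preserves each `‖h_e(x)‖`
and hence `P^S(d)`; it is bijective because `R` is onto in finite dimension. Through `Φ_S`,
`ρ_R` becomes `R` applied coordinatewise on `(ℝ^d)^S`, and `σ_d` is `R`-invariant because `R`
is an isometry fixing the unit sphere. The invariance passes to the product measure.
-/

namespace MeasureTheory.Measure

variable {ι : Type*} [Fintype ι] {α β : ι → Type*} [∀ i, MeasurableSpace (α i)]
  [∀ i, MeasurableSpace (β i)]

theorem piPremeasure_map_image_piCongrRight (e : ∀ i, α i ≃ᵐ β i) (μ : ∀ i, Measure (α i))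
    (s : Set (∀ i, α i)) :
    piPremeasure (fun i => ((μ i).map (e i)).toOuterMeasure) (MeasurableEquiv.piCongrRight e '' s)
      = piPremeasure (fun i => (μ i).toOuterMeasure) s := by
  refine Finset.prod_congr rfl fun i _ => ?_
  have heval : Function.eval i '' (MeasurableEquiv.piCongrRight e '' s)
      = e i '' (Function.eval i '' s) := by
    simp only [Set.image_image]; rfl
  rw [heval]
  show (μ i).map (e i) _ = μ i _
  rw [MeasurableEquiv.map_apply, Set.preimage_image_eq _ (e i).injective]

/-- Unlike `Measure.pi_map_pi`, this needs no σ-finiteness: a measurable equivalence transports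
the premeasure defining `Measure.pi` directly. -/
theorem pi_map_piCongrRight (e : ∀ i, α i ≃ᵐ β i) (μ : ∀ i, Measure (α i)) :
    (Measure.pi μ).map (MeasurableEquiv.piCongrRight e) = Measure.pi fun i => (μ i).map (e i) := by
  set F := MeasurableEquiv.piCongrRight e
  have hcomap : (OuterMeasure.pi fun i => ((μ i).map (e i)).toOuterMeasure).comap F
      = OuterMeasure.pi fun i => (μ i).toOuterMeasure := by
    rw [OuterMeasure.pi, OuterMeasure.comap_boundedBy _ (Or.inr F.surjective)]
    exact congrArg _ (funext (piPremeasure_map_image_piCongrRight e μ))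
  ext t ht
  rw [Measure.map_apply F.measurable ht, Measure.pi_def, Measure.pi_def,
    toMeasure_apply _ _ ht, toMeasure_apply _ _ (F.measurable ht), ← hcomap,
    OuterMeasure.comap_apply, Set.image_preimage_eq _ F.surjective]

theorem pi_image_piCongrRight (e : ∀ i, α i ≃ᵐ β i) (μ : ∀ i, Measure (α i))
    (s : Set (∀ i, α i)) :
    Measure.pi (fun i => (μ i).map (e i)) (MeasurableEquiv.piCongrRight e '' s)
      = Measure.pi μ s := by
  rw [← pi_map_piCongrRight, MeasurableEquiv.map_apply,
    Set.preimage_image_eq _ (MeasurableEquiv.piCongrRight e).injective]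

end MeasureTheory.Measure

theorem sphMeas_map_linearIsometryEquiv {d : ℕ}
    (R : EuclideanSpace ℝ (Fin d) ≃ₗᵢ[ℝ] EuclideanSpace ℝ (Fin d)) :
    (sphMeas d).map R.toHomeomorph.toMeasurableEquiv = sphMeas d := by
  have hsphere : R.toHomeomorph.toMeasurableEquiv ⁻¹' Metric.sphere 0 1 = Metric.sphere 0 1 := by
    ext x
    simp [mem_sphere_iff_norm]
  rw [sphMeas, ← hsphere, ← MeasurableEquiv.restrict_map, hsphere]
  exact congrArg (·.restrict _) (R.toIsometryEquiv.map_hausdorffMeasure _)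

theorem map_funcApp {n : ℕ} {V W F : Type*} [AddCommGroup V] [Module ℝ V] [AddCommGroup W]
    [Module ℝ W] [FunLike F V W] [LinearMapClass F ℝ V W] (f : F) (c : Fin n → ℝ)
    (x : Fin n → V) :
    f (funcApp c x) = funcApp c (fun i => f (x i)) := by
  simp only [funcApp, map_sum, map_smul]

section Polymers

variable {E : Type*} {n d : ℕ} (a : E → Fin n → ℝ) (S : Finset E)

section LinearMap

variable {F : Type*} [FunLike F (EuclideanSpace ℝ (Fin d)) (EuclideanSpace ℝ (Fin d))]
  [LinearMapClass F ℝ (EuclideanSpace ℝ (Fin d)) (EuclideanSpace ℝ (Fin d))]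

theorem PhiMap_map (R : F) (x : Fin n → EuclideanSpace ℝ (Fin d)) :
    PhiMap d a S (fun i => R (x i)) = fun e => R (PhiMap d a S x e) :=
  funext fun e => (map_funcApp R (a e) x).symm

theorem image_PhiMap_image (R : F) (B : Set (Fin n → EuclideanSpace ℝ (Fin d))) :
    PhiMap d a S '' ((fun x i => R (x i)) '' B)
      = (fun y e => R (y e)) '' (PhiMap d a S '' B) := by
  simp only [Set.image_image, PhiMap_map]

end LinearMap

theorem preimage_polymerBody (R : EuclideanSpace ℝ (Fin d) →ₗᵢ[ℝ] EuclideanSpace ℝ (Fin d)) :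
    (fun x i => R (x i)) ⁻¹' polymerBody d a S = polymerBody d a S := by
  ext x
  simp only [polymerBody, Set.mem_preimage, Set.mem_ofPred_eq, ← map_funcApp, R.norm_map]

end Polymers

theorem rotation_invariance_of_polymer_law_general
    {n : ℕ} {E : Type*} (a : E → Fin n → ℝ)
    (d : ℕ)
    (R : EuclideanSpace ℝ (Fin d) →ₗᵢ[ℝ] EuclideanSpace ℝ (Fin d))
    (S : Finset E) :
    Set.BijOn (fun x (i : Fin n) => R (x i)) (polymerBody d a S) (polymerBody d a S)
    ∧ ∀ A : Set (Fin n → EuclideanSpace ℝ (Fin d)), MeasurableSet A →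
        Measure.pi (fun _ : ↥S => sphMeas d)
            (PhiMap d a S '' ((fun x (i : Fin n) => R (x i)) '' A ∩ polymerBody d a S))
          = Measure.pi (fun _ : ↥S => sphMeas d)
              (PhiMap d a S '' (A ∩ polymerBody d a S)) := by
  -- `R` is onto since `EuclideanSpace ℝ (Fin d)` is finite-dimensional.
  let R' := R.toLinearIsometryEquiv rfl
  let ρ := MeasurableEquiv.piCongrRight fun _ : Fin n => R'.toHomeomorph.toMeasurableEquiv
  refine ⟨?_, fun A _ => ?_⟩
  · have hρ : Set.BijOn ρ (ρ ⁻¹' polymerBody d a S) (polymerBody d a S) :=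
      ρ.bijective.bijOn_preimage
    rwa [show ⇑ρ ⁻¹' polymerBody d a S = polymerBody d a S from preimage_polymerBody a S R] at hρ
  rw [← Set.image_inter_preimage, preimage_polymerBody, image_PhiMap_image]
  have hσ := Measure.pi_image_piCongrRight (fun _ : ↥S => R'.toHomeomorph.toMeasurableEquiv)
    (fun _ => sphMeas d) (PhiMap d a S '' (A ∩ polymerBody d a S))
  rw [sphMeas_map_linearIsometryEquiv] at hσ
  exact hσ

/-- **Rotation invariance of the law of `H`-polymers** (Proposition 2.6). -/
theorem rotation_invariance_of_polymer_law
    {n : ℕ} (hn : 1 ≤ n) {E : Type*} [Fintype E] (a : E → Fin n → ℝ)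
    (hnz : ∀ e, a e ≠ 0)
    (hess : Submodule.span ℝ (Set.range a) = (⊤ : Submodule ℝ (Fin n → ℝ)))
    (d : ℕ) (hd : 1 ≤ d)
    (R : EuclideanSpace ℝ (Fin d) →ₗᵢ[ℝ] EuclideanSpace ℝ (Fin d))
    (S : Finset E) (hS : IsBase a S) :
    Set.BijOn (fun x (i : Fin n) => R (x i)) (polymerBody d a S) (polymerBody d a S)
    ∧ ∀ A : Set (Fin n → EuclideanSpace ℝ (Fin d)), MeasurableSet A →
        Measure.pi (fun _ : ↥S => sphMeas d)
            (PhiMap d a S '' ((fun x (i : Fin n) => R (x i)) '' A ∩ polymerBody d a S))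
          = Measure.pi (fun _ : ↥S => sphMeas d)
              (PhiMap d a S '' (A ∩ polymerBody d a S)) :=
  rotation_invariance_of_polymer_law_general a d R S
end
end
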